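/- For every prime p, v_{p^2+p+1} ≡ -1 (mod p) and v_{p^2+p+2} ≡ -1 (mod p). -/

import Mathlib

/-!
Modulo `p` the factor `(2n - 3 - j) + jX` only depends on `j mod p`, and a full period is
`∏_{a ∈ 𝔽_p} (c + a(X - 1)) = c(1 - (X - 1)^(p-1)) = -c(X + ⋯ + X^(p-1))`, `c ≡ 2n - 3`:
the factors with `a ≠ 0` are `a(X - 1 + c/a)`, `a ↦ -c/a` permutes `𝔽_p^×`, and `∏ a = -1`.
For `n = p² + p + 1` the product consists of `2p + 2` such blocks (with `c = -1`); for
`n = p² + p + 2` it has the same blocks (with `c = 1`) followed by the factors `1` and `X`.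
Writing `B = X + ⋯ + X^(p-1)`, Frobenius gives `(1 - X)B^(2p+2) = B²(X^p) · (1 - X)B²`, and
`(1 - X)B²` only has exponents in `[2, 2p - 1]`, so the coefficient of `X^(p(p+1))` in this
product is `[X^p]B² · [X^p](1 - X)B² = (p - 1) · 1 ≡ -1`.
-/

open Polynomial Finset

noncomputable def v (n : ℕ) : ℤ :=
  if n = 0 then -1 else
  ((1 - X) * ∏ j ∈ Finset.range (2 * n - 2),
      (C ((2 * n : ℤ) - 3 - (j : ℤ)) + C (j : ℤ) * X)).coeff (n - 1)

theorem Fintype.prod_eq_mul_prod_units {G₀ M : Type*} [GroupWithZero G₀] [Fintype G₀]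
    [DecidableEq G₀] [CommMonoid M] (f : G₀ → M) :
    ∏ a, f a = f 0 * ∏ u : G₀ˣ, f u := by
  rw [← Finset.mul_prod_erase univ f (mem_univ 0), ← Finset.filter_ne',
    Finset.prod_subtype (p := (· ≠ 0)) _ (fun a => by simp) f]
  exact congrArg _ (Fintype.prod_equiv unitsEquivNeZero (fun u : G₀ˣ => f u) _ fun _ => rfl).symm

theorem prod_units_X_sub_C (K : Type*) [Field K] [Fintype K] [DecidableEq K] :
    ∏ u : Kˣ, (X - C (u : K)) = X ^ (Fintype.card K - 1) - 1 := by
  classical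
  have := Lagrange.nodal_subgroup_eq_X_pow_card_sub_one (⊤ : Subgroup Kˣ)
  simp only [Lagrange.nodal, Subgroup.coe_top, Set.toFinset_univ, Subgroup.mem_top,
    Fintype.card_subtype_true] at this
  simpa [Fintype.card_units] using this

theorem prod_algebraMap_add_algebraMap_mul {K A : Type*} [Field K] [Fintype K] [DecidableEq K]
    [CommRing A] [Algebra K A] (c : Kˣ) (Y : A) :
    ∏ a : K, (algebraMap K A c + algebraMap K A a * Y) =
      algebraMap K A c * (1 - Y ^ (Fintype.card K - 1)) := by
  have hfactor : ∀ u : Kˣ, algebraMap K A c + algebraMap K A u * Y =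
      algebraMap K A u * (Y - algebraMap K A ↑(-(c * u⁻¹))) := by
    intro u
    have hu : algebraMap K A u * algebraMap K A ↑u⁻¹ = 1 := by
      rw [← map_mul, Units.mul_inv, map_one]
    simp only [Units.val_neg, Units.val_mul, map_neg, map_mul]
    linear_combination -(algebraMap K A c) * hu
  have hreindex :
      ∏ u : Kˣ, (Y - algebraMap K A ↑(-(c * u⁻¹))) = Y ^ (Fintype.card K - 1) - 1 := by
    rw [Fintype.prod_equiv ((Equiv.inv Kˣ).trans (Equiv.mulLeft (-c))) _
      (fun u => Y - algebraMap K A u) (fun u => by simp)]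
    simpa [map_prod] using congrArg (aeval Y) (prod_units_X_sub_C K)
  rw [Fintype.prod_eq_mul_prod_units, Finset.prod_congr rfl fun u _ => hfactor u,
    Finset.prod_mul_distrib, hreindex, ← map_prod, ← Units.coe_prod,
    FiniteField.prod_univ_units_id_eq_neg_one]
  simp only [Units.val_neg, Units.val_one, map_neg, map_one, map_zero, zero_mul, add_zero]
  ring

theorem prod_range_natCast (n : ℕ) [NeZero n] {M : Type*} [CommMonoid M] (f : ZMod n → M) :
    ∏ i ∈ range n, f i = ∏ a : ZMod n, f a :=
  Finset.prod_nbij' (fun j => (j : ZMod n)) ZMod.val (by simp) (by simp [ZMod.val_lt])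
    (fun j hj => ZMod.val_cast_of_lt (mem_range.1 hj)) (fun a _ => ZMod.natCast_zmod_val a)
    (fun _ _ => rfl)

theorem prod_range_mul_natCast (n k : ℕ) [NeZero n] {M : Type*} [CommMonoid M]
    (f : ZMod n → M) : ∏ i ∈ range (n * k), f i = (∏ a : ZMod n, f a) ^ k := by
  induction k with
  | zero => simp
  | succ k ih =>
    rw [Nat.mul_succ, prod_range_add, ih, pow_succ, ← prod_range_natCast]
    simp

theorem coeff_geom_sum_X {R : Type*} [Semiring R] (n k : ℕ) :
    (∑ i ∈ range n, (X : R[X]) ^ i).coeff k = if k < n then 1 else 0 := by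
  simp [coeff_X_pow]

theorem coeff_geom_sum_X_sq {R : Type*} [Semiring R] {n k : ℕ} (hk : k < n) :
    ((∑ i ∈ range n, (X : R[X]) ^ i) ^ 2).coeff k = k + 1 := by
  rw [sq, coeff_mul, sum_congr rfl fun x hx => ?_, sum_const, Nat.card_antidiagonal,
    nsmul_one, Nat.cast_add_one]
  rw [HasAntidiagonal.mem_antidiagonal] at hx
  rw [coeff_geom_sum_X, coeff_geom_sum_X, if_pos (by omega), if_pos (by omega), one_mul]

theorem coeff_expand_mul_of_coeff_mul_eq_zero {R : Type*} [CommSemiring R] {p : ℕ} (hp : 0 < p)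
    (S : R[X]) {W : R[X]} (hW : ∀ j ≠ 1, W.coeff (p * j) = 0) (m : ℕ) :
    (expand R p S * W).coeff (p * (m + 1)) = S.coeff m * W.coeff p := by
  induction S using Polynomial.induction_on' with
  | add S T hS hT => simp only [map_add, add_mul, coeff_add, hS, hT]
  | monomial k a =>
    rw [expand_monomial, ← C_mul_X_pow_eq_monomial, mul_assoc, coeff_C_mul, coeff_X_pow_mul',
      coeff_monomial, mul_comm k p]
    by_cases hkm : k = m
    · subst hkm
      rw [if_pos (by nlinarith), if_pos rfl, mul_add_one, Nat.add_sub_cancel_left]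
    · rw [if_neg hkm, zero_mul]
      split_ifs with hle
      · rw [← Nat.mul_sub, hW _ (by omega), mul_zero]
      · rw [mul_zero]

theorem one_sub_X_sub_one_pow {K : Type*} [Field K] (p : ℕ) [Fact p.Prime] [CharP K p] :
    (1 - (X - 1) ^ (p - 1) : K[X]) = -(X * ∑ i ∈ range (p - 1), X ^ i) := by
  have hp : p - 1 + 1 = p := Nat.sub_add_cancel (Fact.out : p.Prime).one_le
  have hgeom : (X - 1 : K[X]) ^ (p - 1) = ∑ i ∈ range p, X ^ i := by
    refine mul_right_cancel₀ (X_sub_C_ne_zero (1 : K)) ?_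
    rw [C_1, ← pow_succ, hp, geom_sum_mul, sub_pow_char, one_pow]
  have hsplit := geom_sum_succ (x := (X : K[X])) (n := p - 1)
  rw [hp] at hsplit
  rw [hgeom, hsplit]
  ring

theorem intCast_v {R : Type*} [CommRing R] {n : ℕ} (hn : n ≠ 0) :
    (v n : R) = ((1 - X) * ∏ j ∈ range (2 * n - 2),
      (C (((2 * n - 3 : ℤ) : R) - j) + C (j : R) * X)).coeff (n - 1) := by
  rw [v, if_neg hn, ← eq_intCast (Int.castRingHom R), ← coeff_map, Polynomial.map_mul,
    Polynomial.map_prod]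
  congr 2
  · simp
  · refine prod_congr rfl fun j _ => ?_
    rw [Polynomial.map_add, Polynomial.map_mul, map_C, map_C, map_X]
    simp

section ModP

variable (p : ℕ) [Fact p.Prime]

theorem prod_zmod_sub_add_mul_X (c : (ZMod p)ˣ) :
    ∏ a : ZMod p, (C ((c : ZMod p) - a) + C a * X) =
      C (c : ZMod p) * (1 - (X - 1) ^ (p - 1)) := by
  have h := prod_algebraMap_add_algebraMap_mul c (X - 1 : (ZMod p)[X])
  rw [ZMod.card, algebraMap_eq] at h
  rw [← h]
  refine prod_congr rfl fun a _ => ?_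
  rw [C_sub]
  ring

theorem prod_range_mul_sub_add_mul_X (c : (ZMod p)ˣ) (k : ℕ) :
    ∏ j ∈ range (p * k), (C ((c : ZMod p) - j) + C (j : ZMod p) * X) =
      (C (c : ZMod p) * (1 - (X - 1) ^ (p - 1))) ^ k := by
  rw [prod_range_mul_natCast p k (fun a : ZMod p => C ((c : ZMod p) - a) + C a * X),
    prod_zmod_sub_add_mul_X]

theorem coeff_one_sub_X_mul_one_sub_X_sub_one_pow :
    ((1 - X) * (1 - (X - 1) ^ (p - 1)) ^ (2 * p + 2) : (ZMod p)[X]).coeff (p ^ 2 + p) = -1 := by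
  have hp2 : 2 ≤ p := (Fact.out : p.Prime).two_le
  set G := ∑ i ∈ range (p - 1), (X : (ZMod p)[X]) ^ i
  have hG : (1 - X) * G = 1 - X ^ (p - 1) := mul_neg_geom_sum X (p - 1)
  have hsplit : (1 - X) * (1 - (X - 1) ^ (p - 1)) ^ (2 * p + 2) =
      expand (ZMod p) p (X ^ 2 * G ^ 2) * (X ^ 2 * G - X ^ (p + 1) * G) := by
    have hQ : (1 - (X - 1) ^ (p - 1) : (ZMod p)[X]) = -(X * G) := one_sub_X_sub_one_pow p
    rw [ZMod.expand_card, hQ, Even.neg_pow ⟨p + 1, by ring⟩, show p + 1 = 2 + (p - 1) by omega,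
      pow_add X 2]
    linear_combination ((X ^ 2 * G ^ 2) ^ p * X ^ 2 * G) * hG
  have hS : (X ^ 2 * G ^ 2).coeff p = -1 := by
    rw [coeff_X_pow_mul', if_pos hp2, coeff_geom_sum_X_sq (by omega), Nat.cast_sub hp2,
      ZMod.natCast_self]
    norm_num
  have hWp : (X ^ 2 * G - X ^ (p + 1) * G).coeff p = 1 := by
    rw [coeff_sub, coeff_X_pow_mul', coeff_X_pow_mul', if_pos hp2, if_neg (by omega),
      coeff_geom_sum_X, if_pos (by omega), sub_zero]
  have hW : ∀ j ≠ 1, (X ^ 2 * G - X ^ (p + 1) * G).coeff (p * j) = 0 := by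
    intro j hj
    rcases Nat.lt_or_ge j 2 with hj2 | hj2
    · obtain rfl : j = 0 := by omega
      simp
    · have : 2 * p ≤ p * j := by nlinarith
      rw [coeff_sub, coeff_X_pow_mul', coeff_X_pow_mul', coeff_geom_sum_X, coeff_geom_sum_X,
        if_neg (by omega : ¬p * j - 2 < p - 1), if_neg (by omega : ¬p * j - (p + 1) < p - 1)]
      simp only [ite_self, sub_zero]
  rw [hsplit, show p ^ 2 + p = p * (p + 1) by ring,
    coeff_expand_mul_of_coeff_mul_eq_zero (Fact.out : p.Prime).pos _ hW, hS, hWp, mul_one]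

theorem intCast_v_sq_add_self_add_one : (v (p ^ 2 + p + 1) : ZMod p) = -1 := by
  have hc :
      ((2 * ((p ^ 2 + p + 1 : ℕ) : ℤ) - 3 : ℤ) : ZMod p) = ((-1 : (ZMod p)ˣ) : ZMod p) := by
    push_cast [ZMod.natCast_self]
    ring
  have hlen : 2 * (p ^ 2 + p + 1) - 2 = p * (2 * p + 2) := Nat.sub_eq_of_eq_add (by ring)
  rw [intCast_v (by positivity), hc, hlen, prod_range_mul_sub_add_mul_X, mul_pow, ← C_pow,
    Units.val_neg, Units.val_one, Even.neg_one_pow ⟨p + 1, by ring⟩, C_1, one_mul,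
    Nat.add_sub_cancel, coeff_one_sub_X_mul_one_sub_X_sub_one_pow]

theorem intCast_v_sq_add_self_add_two : (v (p ^ 2 + p + 2) : ZMod p) = -1 := by
  have hc :
      ((2 * ((p ^ 2 + p + 2 : ℕ) : ℤ) - 3 : ℤ) : ZMod p) = ((1 : (ZMod p)ˣ) : ZMod p) := by
    push_cast [ZMod.natCast_self]
    ring
  have hlen : 2 * (p ^ 2 + p + 2) - 2 = p * (2 * p + 2) + 2 := Nat.sub_eq_of_eq_add (by ring)
  have htail : ∏ i ∈ range 2, (C ((1 : ZMod p) - ((p * (2 * p + 2) + i : ℕ) : ZMod p)) +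
      C ((p * (2 * p + 2) + i : ℕ) : ZMod p) * X) = X := by
    simp [prod_range_succ]
  rw [intCast_v (by positivity), hc, hlen, prod_range_add, prod_range_mul_sub_add_mul_X,
    Units.val_one, htail, C_1, one_mul, mul_comm _ X, ← mul_assoc, mul_comm _ X, mul_assoc,
    show p ^ 2 + p + 2 - 1 = p ^ 2 + p + 1 by omega, coeff_X_mul,
    coeff_one_sub_X_mul_one_sub_X_sub_one_pow]

end ModP

theorem v_p_sq_p_add (p : ℕ) (hp : p.Prime) :
    v (p ^ 2 + p + 1) ≡ -1 [ZMOD (p : ℤ)] ∧ v (p ^ 2 + p + 2) ≡ -1 [ZMOD (p : ℤ)] := by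
  have := Fact.mk hp
  simp only [← ZMod.intCast_eq_intCast_iff, intCast_v_sq_add_self_add_one,
    intCast_v_sq_add_self_add_two, Int.cast_neg, Int.cast_one, and_self]
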